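/- Let M be an effective t-motif over K such that M ⊗_{K[t]} K^s[t] admits a K^s[t]-basis of σ-invariant elements (σ being extended semilinearly, acting as the q-th power map on coefficients in K^s). Then there exist a finite-dimensional K-vector space V together with an additive map σ_V : V → V satisfying σ_V(x·v) = x^q·σ_V(v) and K·σ_V(V) = V, and an injective K[t]-linear map ι : M → V ⊗_K K[t] satisfying ι∘σ = σ′∘ι, where σ′ is the τ-semilinear map on V ⊗_K K[t] determined by σ′(v⊗f) = σ_V(v)⊗τ(f). (Every t-motif trivialized over K^s is a submotif of one of the form M(V); such M are the Artin t-motifs.) -/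

import Mathlib

/-!
Let the columns of `E` be the σ-invariant basis, so `S · τ(E) = E`. Then `E⁻¹ · S = τ(E⁻¹)`, and
`v ↦ E⁻¹ v` embeds `M` into `K^s[t]^r`, carrying `σ` to the coordinatewise `τ`. The coefficients
of `E⁻¹` generate a finite separable extension `L/K`, so the embedding already takes values in
`L[t]^r`. Expanding elements of `L` in a `K`-basis `b` of `L` identifies `L[t]^r` with
`K[t]^(r·[L:K])`, and the coordinatewise `τ` becomes `A · τ`, where `A` is block diagonal with
blocks the matrix of `x ↦ x^q` in the basis `b`. Since `L/K` is separable, the `b_j^q` still span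
`L`, so `A` is invertible, which gives `K · σ_V(V) = V`.
-/

open Polynomial Matrix

lemma Polynomial.map_map_iterateFrobenius_comm {R S : Type*} [CommSemiring R] [CommSemiring S]
    (g : R →+* S) (p n : ℕ) [ExpChar R p] [ExpChar S p] (f : R[X]) :
    (f.map (iterateFrobenius R p n)).map g = (f.map g).map (iterateFrobenius S p n) := by
  rw [Polynomial.map_map, Polynomial.map_map, g.iterateFrobenius_comm]

namespace Matrix

lemma blockDiagonal_mulVec {m n o α : Type*} [Fintype n] [Fintype o] [DecidableEq o]
    [NonUnitalNonAssocSemiring α] (M : o → Matrix m n α) (v : n × o → α) :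
    blockDiagonal M *ᵥ v = fun x => (M x.2 *ᵥ fun j => v (j, x.2)) x.1 := by
  ext ⟨i, k⟩
  simp [mulVec, dotProduct, Fintype.sum_prod_type, blockDiagonal_apply]

lemma span_range_mulVec_pow_eq_top {K ξ : Type*} [Field K] [Fintype ξ] [DecidableEq ξ]
    {A : Matrix ξ ξ K} (hA : IsUnit A) {q : ℕ} (hq : q ≠ 0) :
    Submodule.span K (Set.range fun v : ξ → K => A *ᵥ fun i => v i ^ q) = ⊤ := by
  have hrange : LinearMap.range A.mulVecLin = ⊤ :=
    LinearMap.range_eq_top.mpr (mulVec_surjective_iff_isUnit.mpr hA)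
  rw [eq_top_iff, ← hrange, range_mulVecLin, Submodule.span_le]
  rintro _ ⟨i, rfl⟩
  refine Submodule.subset_span ⟨Pi.single i 1, ?_⟩
  have hsingle : (fun j => Pi.single i (1 : K) j ^ q) = (Pi.single i 1 : ξ → K) := by
    ext j
    rcases eq_or_ne j i with rfl | hj
    · simp
    · simp [hj, zero_pow hq]
  simp only [hsingle, mulVec_single_one]

lemma mul_eq_map_of_mul_map_eq {R m : Type*} [CommRing R] [Fintype m] [DecidableEq m]
    (τ : R →+* R) {S E E' : Matrix m m R} (hE'E : E' * E = 1) (h : S * E.map τ = E) :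
    E' * S = E'.map τ := by
  have hτ : E.map τ * E'.map τ = 1 := by
    rw [← Matrix.map_mul, mul_eq_one_comm.mp hE'E, Matrix.map_one _ (map_zero τ) (map_one τ)]
  calc E' * S = E' * (S * E.map τ) * E'.map τ := by rw [mul_assoc, mul_assoc, hτ, mul_one]
    _ = E'.map τ := by rw [h, hE'E, one_mul]

lemma mul_map_algebraMap_eq_map_iterateFrobenius_of_map {K L Ks o : Type*} [CommRing K]
    [CommRing L] [CommRing Ks] [Algebra K L] [Algebra K Ks] [Algebra L Ks] [IsScalarTower K L Ks]
    [FaithfulSMul L Ks] [Fintype o] (p n : ℕ) [ExpChar L p] [ExpChar Ks p]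
    (S : Matrix o o K[X]) (P : Matrix o o L[X])
    (h : P.map (mapRingHom (algebraMap L Ks)) * S.map (mapRingHom (algebraMap K Ks)) =
      (P.map (mapRingHom (algebraMap L Ks))).map (mapRingHom (iterateFrobenius Ks p n))) :
    P * S.map (mapRingHom (algebraMap K L)) = P.map (mapRingHom (iterateFrobenius L p n)) := by
  have hφ : mapRingHom (algebraMap L Ks) ∘ mapRingHom (algebraMap K L) =
      mapRingHom (algebraMap K Ks) := by
    ext f : 1
    simp [Polynomial.map_map, ← IsScalarTower.algebraMap_eq]
  have hτ : mapRingHom (algebraMap L Ks) ∘ mapRingHom (iterateFrobenius L p n) =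
      mapRingHom (iterateFrobenius Ks p n) ∘ mapRingHom (algebraMap L Ks) :=
    funext (map_map_iterateFrobenius_comm _ p n)
  refine Matrix.map_injective (f := mapRingHom (algebraMap L Ks))
    (Polynomial.map_injective _ (FaithfulSMul.algebraMap_injective L Ks)) ?_
  beta_reduce
  rw [Matrix.map_mul, Matrix.map_map, Matrix.map_map, hφ, hτ, ← Matrix.map_map, h]

end Matrix

namespace Module.Basis

section CommRing

variable {ι F L : Type*} [CommRing F] [CommRing L] [Algebra F L] (b : Basis ι F L)

noncomputable def polyRepr (f : L[X]) (j : ι) : F[X] :=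
  f.sum fun k a => monomial k (b.repr a j)

@[simp]
lemma coeff_polyRepr (f : L[X]) (j : ι) (k : ℕ) :
    (b.polyRepr f j).coeff k = b.repr (f.coeff k) j := by
  simp +contextual [polyRepr, Polynomial.sum_def, finsetSum_coeff, coeff_monomial]

lemma polyRepr_add (f g : L[X]) : b.polyRepr (f + g) = b.polyRepr f + b.polyRepr g := by
  ext j k
  simp

lemma polyRepr_map_mul (g : F[X]) (f : L[X]) :
    b.polyRepr (g.map (algebraMap F L) * f) = g • b.polyRepr f := by
  ext j k
  simp only [coeff_polyRepr, coeff_mul, coeff_map, ← Algebra.smul_def, map_sum, map_smul,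
    Pi.smul_apply, smul_eq_mul, Finsupp.coe_finsetSum, Finset.sum_apply, Finsupp.smul_apply]

lemma polyRepr_injective : Function.Injective b.polyRepr := by
  intro f g h
  ext k
  refine b.repr.injective (Finsupp.ext fun j => ?_)
  simpa using congr_arg (fun f => (f j).coeff k) h

lemma toMatrix_mulVec {ι' : Type*} [Fintype ι'] (v : ι' → L) (c : ι' → F) :
    b.toMatrix v *ᵥ c = b.repr (∑ j, c j • v j) := by
  ext i
  simp [mulVec, dotProduct, toMatrix_apply, mul_comm]

variable [Fintype ι] (p n : ℕ)

lemma repr_pow_expChar_pow [ExpChar L p] (x : L) :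
    ⇑(b.repr (x ^ p ^ n)) = b.toMatrix (b · ^ p ^ n) *ᵥ fun j => b.repr x j ^ p ^ n := by
  conv_lhs => rw [← b.sum_repr x, ← iterateFrobenius_def (R := L) p n, map_sum]
  simp [toMatrix_mulVec, iterateFrobenius_def, _root_.smul_pow]

lemma polyRepr_map_iterateFrobenius [ExpChar F p] [ExpChar L p] (f : L[X]) :
    b.polyRepr (f.map (iterateFrobenius L p n)) =
      (b.toMatrix (b · ^ p ^ n)).map C *ᵥ
        fun j => (b.polyRepr f j).map (iterateFrobenius F p n) := by
  ext j k
  simp [repr_pow_expChar_pow, mulVec, dotProduct, iterateFrobenius_def, finsetSum_coeff]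

end CommRing

lemma isUnit_toMatrix_pow_expChar_pow {ι F L : Type*} [Fintype ι] [DecidableEq ι] [Field F]
    [Field L] [Algebra F L] [Algebra.IsSeparable F L] (b : Basis ι F L) (p n : ℕ) [ExpChar F p] :
    IsUnit (b.toMatrix (b · ^ p ^ n)) := by
  refine mulVec_surjective_iff_isUnit.mp fun y => ?_
  have hspan := Field.span_map_pow_expChar_pow_eq_top_of_isSeparable p n b.span_eq
  obtain ⟨c, hc⟩ := (Submodule.mem_span_range_iff_exists_fun F).mp
    (hspan ▸ Submodule.mem_top : b.equivFun.symm y ∈ _)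
  exact ⟨c, by rw [b.toMatrix_mulVec, hc]; exact b.equivFun.apply_symm_apply y⟩

section MulVec

variable {ι o F L : Type*} [Fintype o] [CommRing F] [CommRing L] [Algebra F L]
  (b : Basis ι F L) (P : Matrix o o L[X])

noncomputable def polyReprMulVec : (o → F[X]) →ₗ[F[X]] (ι × o → F[X]) where
  toFun v x := b.polyRepr ((P *ᵥ fun i => (v i).map (algebraMap F L)) x.2) x.1
  map_add' v w := by
    ext x : 1
    simp [Polynomial.map_add, ← Pi.add_def, mulVec_add, polyRepr_add]
  map_smul' g v := by
    ext x : 1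
    have hmap : (fun i => (g * v i).map (algebraMap F L)) =
        g.map (algebraMap F L) • fun i => (v i).map (algebraMap F L) := by
      ext i : 1
      simp [Polynomial.map_mul]
    simp only [Pi.smul_apply, smul_eq_mul, RingHom.id_apply]
    rw [hmap, mulVec_smul, Pi.smul_apply, smul_eq_mul, polyRepr_map_mul, Pi.smul_apply,
      smul_eq_mul]

lemma polyReprMulVec_injective [DecidableEq o] [IsDomain L] [FaithfulSMul F L] (hP : P.det ≠ 0) :
    Function.Injective (b.polyReprMulVec P) := by
  rw [← LinearMap.ker_eq_bot, LinearMap.ker_eq_bot']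
  intro v hv
  have hw : (P *ᵥ fun i => (v i).map (algebraMap F L)) = 0 := by
    ext i : 1
    exact b.polyRepr_injective (funext fun j => congr_fun hv (j, i))
  ext i : 1
  exact Polynomial.map_injective _ (FaithfulSMul.algebraMap_injective F L)
    (by simpa using congr_fun (eq_zero_of_mulVec_eq_zero hP hw) i)

lemma polyReprMulVec_mulVec_frobenius [DecidableEq o] [Fintype ι] (p n : ℕ) [ExpChar F p]
    [ExpChar L p] (S : Matrix o o F[X])
    (hPS : P * S.map (mapRingHom (algebraMap F L)) = P.map (mapRingHom (iterateFrobenius L p n)))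
    (v : o → F[X]) :
    b.polyReprMulVec P (S *ᵥ fun i => mapRingHom (iterateFrobenius F p n) (v i)) =
      (blockDiagonal fun _ : o => b.toMatrix (b · ^ p ^ n)).map C *ᵥ
        fun x => mapRingHom (iterateFrobenius F p n) (b.polyReprMulVec P v x) := by
  set τF := mapRingHom (iterateFrobenius F p n)
  set τL := mapRingHom (iterateFrobenius L p n)
  set φ := mapRingHom (algebraMap F L)
  have hφS : (fun i => φ ((S *ᵥ fun i => τF (v i)) i)) = S.map φ *ᵥ fun i => τL (φ (v i)) := by
    ext i : 1
    rw [RingHom.map_mulVec]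
    congr 1
    ext k : 1
    exact map_map_iterateFrobenius_comm _ p n (v k)
  have hw : (P *ᵥ fun i => φ ((S *ᵥ fun i => τF (v i)) i)) =
      fun i => τL ((P *ᵥ fun i => φ (v i)) i) := by
    ext i : 1
    rw [hφS, mulVec_mulVec, hPS, RingHom.map_mulVec]
    rfl
  ext ⟨j, i⟩ : 1
  change b.polyRepr ((P *ᵥ fun i => φ ((S *ᵥ fun i => τF (v i)) i)) i) j = _
  rw [hw]
  simp only [blockDiagonal_map _ _ (map_zero C), blockDiagonal_mulVec, τL, coe_mapRingHom,
    polyRepr_map_iterateFrobenius]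
  rfl

end MulVec

end Module.Basis

theorem exists_fin_intertwining_of_fintype {R M ξ : Type*} [CommRing R] [AddCommMonoid M]
    [Module R[X] M] [Fintype ξ] [DecidableEq ξ] (σ : M → M) (φ : R[X] → R[X])
    (A : Matrix ξ ξ R) (hA : IsUnit A) (ι : M →ₗ[R[X]] (ξ → R[X])) (hι : Function.Injective ι)
    (hσ : ∀ v, ι (σ v) = A.map C *ᵥ fun x => φ (ι v x)) :
    ∃ (m : ℕ) (A' : Matrix (Fin m) (Fin m) R), IsUnit A' ∧
      ∃ ι' : M →ₗ[R[X]] (Fin m → R[X]), Function.Injective ι' ∧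
        ∀ v, ι' (σ v) = A'.map C *ᵥ fun i => φ (ι' v i) := by
  let e := Fintype.equivFin ξ
  refine ⟨_, A.submatrix e.symm e.symm, (isUnit_submatrix_equiv _ _).mpr hA,
    (LinearEquiv.funCongrLeft R[X] R[X] e.symm).toLinearMap ∘ₗ ι,
    (LinearEquiv.funCongrLeft R[X] R[X] e.symm).injective.comp hι, fun v => ?_⟩
  ext i
  simp [LinearEquiv.funCongrLeft_apply, hσ, ← submatrix_map, submatrix_mulVec_equiv,
    Function.comp_def]

theorem exists_fin_intertwining_of_mul_eq_map_iterateFrobenius {K L o : Type*} [Field K]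
    [Field L] [Algebra K L] [FiniteDimensional K L] [Algebra.IsSeparable K L] [Fintype o]
    [DecidableEq o] (p n : ℕ) [ExpChar K p] [ExpChar L p] (S : Matrix o o K[X])
    (P : Matrix o o L[X]) (hP : P.det ≠ 0)
    (hPS : P * S.map (mapRingHom (algebraMap K L)) = P.map (mapRingHom (iterateFrobenius L p n))) :
    ∃ (m : ℕ) (A : Matrix (Fin m) (Fin m) K), IsUnit A ∧
      ∃ ι : (o → K[X]) →ₗ[K[X]] (Fin m → K[X]), Function.Injective ι ∧
        ∀ v, ι (S *ᵥ fun i => mapRingHom (iterateFrobenius K p n) (v i)) =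
          A.map C *ᵥ fun i => mapRingHom (iterateFrobenius K p n) (ι v i) := by
  let b := Module.finBasis K L
  have hB := b.isUnit_toMatrix_pow_expChar_pow p n
  refine exists_fin_intertwining_of_fintype _ _
    (blockDiagonal fun _ : o => b.toMatrix (b · ^ p ^ n)) ?_ (b.polyReprMulVec P)
    (b.polyReprMulVec_injective P hP) (b.polyReprMulVec_mulVec_frobenius P p n S hPS)
  rw [isUnit_iff_isUnit_det, det_blockDiagonal, Finset.prod_const]
  exact ((isUnit_iff_isUnit_det _).mp hB).pow _

theorem exists_intermediateField_matrix_lift {K Ks m n : Type*} [Field K] [Field Ks]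
    [Algebra K Ks] [Algebra.IsIntegral K Ks] [Finite m] [Finite n] (E : Matrix m n Ks[X]) :
    ∃ (L : IntermediateField K Ks) (P : Matrix m n L[X]), FiniteDimensional K L ∧
      P.map (mapRingHom (algebraMap L Ks)) = E := by
  let T : Set Ks := ⋃ (i) (j), ((E i j).coeffs : Set Ks)
  have : Finite T :=
    Set.finite_iUnion fun i => Set.finite_iUnion fun j => (E i j).coeffs.finite_toSet
  have hlift : ∀ i j, ∃ P : (IntermediateField.adjoin K T)[X], P.map (algebraMap _ Ks) = E i j := by
    intro i j
    refine (mem_lifts _).mp ((lifts_iff_coeff_lifts _).mpr fun k => ?_)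
    by_cases hk : (E i j).coeff k = 0
    · exact ⟨0, by simp [hk]⟩
    · exact ⟨⟨_, IntermediateField.subset_adjoin K T
        (Set.mem_iUnion₂.mpr ⟨i, j, coeff_mem_coeffs hk⟩)⟩, rfl⟩
  choose P hP using hlift
  exact ⟨_, P,
    IntermediateField.finiteDimensional_adjoin fun x _ => Algebra.IsIntegral.isIntegral x,
    Matrix.ext hP⟩

theorem stmt_15
    (p n : ℕ) [Fact p.Prime]
    (K : Type) [Field K] [CharP K p]
    (Ks : Type) [Field Ks] [Algebra K Ks] [CharP Ks p] [IsSepClosure K Ks]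
    (r : ℕ) (S : Matrix (Fin r) (Fin r) (Polynomial K))
    -- `M ⊗ K^s[t]` admits a `K^s[t]`-basis of σ-invariant elements:
    (htriv : ∃ E E' : Matrix (Fin r) (Fin r) (Polynomial Ks),
      E * E' = 1 ∧ E' * E = 1 ∧
      ∀ j, (S.map (Polynomial.mapRingHom (algebraMap K Ks))).mulVec
          (fun i => Polynomial.mapRingHom (iterateFrobenius Ks p n) (E i j)) =
        fun i => E i j) :
    ∃ (m : ℕ) (A : Matrix (Fin m) (Fin m) K),
      -- `K · σ_V(V) = V`:
      Submodule.span K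
        (Set.range fun v : Fin m → K => A.mulVec fun i => v i ^ p ^ n) = ⊤ ∧
      -- an injective morphism `ι : M → M(V) = V ⊗_K K[t]`:
      ∃ ι : (Fin r → Polynomial K) →ₗ[Polynomial K] (Fin m → Polynomial K),
        Function.Injective ι ∧
        ∀ v : Fin r → Polynomial K,
          ι (S.mulVec fun i => Polynomial.mapRingHom (iterateFrobenius K p n) (v i)) =
            (A.map Polynomial.C).mulVec
              fun i => Polynomial.mapRingHom (iterateFrobenius K p n) (ι v i) := by
  obtain ⟨E, E', -, hE'E, hσE⟩ := htriv
  have hE' : E' * S.map (mapRingHom (algebraMap K Ks)) =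
      E'.map (mapRingHom (iterateFrobenius Ks p n)) :=
    mul_eq_map_of_mul_map_eq _ hE'E (Matrix.ext fun i j => congr_fun (hσE j) i)
  obtain ⟨L, P, _, rfl⟩ := exists_intermediateField_matrix_lift (K := K) E'
  have : Algebra.IsSeparable K L := Algebra.isSeparable_tower_bot_of_isSeparable K L Ks
  have hPdet : P.det ≠ 0 := fun h0 => det_ne_zero_of_right_inverse hE'E <| by
    rw [← RingHom.mapMatrix_apply, ← RingHom.map_det, h0, map_zero]
  obtain ⟨m, A, hA, ι, hι, hισ⟩ := exists_fin_intertwining_of_mul_eq_map_iterateFrobenius p n S P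
    hPdet (mul_map_algebraMap_eq_map_iterateFrobenius_of_map p n S P hE')
  exact ⟨m, A, span_range_mulVec_pow_eq_top hA (pow_ne_zero n (Fact.out : p.Prime).ne_zero),
    ι, hι, hισ⟩
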